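/- Let K = (T, A)_ω be an ALCHIO weighted knowledge base, I an interpretation, 𝒞 the closure of the set of concepts occurring in T under negation and subconcepts, and for d ∈ Δ^I let tp_I(d) = {C ∈ 𝒞 | d ∈ C^I}. Let ρ map every d ∈ Δ^I to d if d ∈ Ind(K), and to the fresh element w_{tp_I(d)} otherwise, and let J = ρ(I) be the image interpretation (with domain ρ(Δ^I), A^J = ρ(A^I) for every concept name A, and r^J = {(ρ(d), ρ(e)) | (d,e) ∈ r^I} for every role name r). Then for every d ∈ Δ^I, tp_J(ρ(d)) = tp_I(d). -/

import Mathlib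

namespace DL

/-! ### Syntax -/

abbrev IndName := ℕ
abbrev CName := ℕ
abbrev RName := ℕ

/-- Roles: role names and inverse roles. -/
inductive Role where
  | name : RName → Role
  | inv  : RName → Role
deriving DecidableEq

/-- `ALCHIO` concepts. -/
inductive Concept where
  | top  : Concept
  | bot  : Concept
  | atom : CName → Concept
  | nom  : IndName → Concept
  | neg  : Concept → Concept
  | conj : Concept → Concept → Concept
  | ex   : Role → Concept → Concept
deriving DecidableEq

/-- TBox axioms: concept inclusions and role inclusions. -/
inductive Axiom where
  | ci : Concept → Concept → Axiom
  | ri : Role → Role → Axiom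
deriving DecidableEq

/-- ABox assertions. -/
inductive Assertion where
  | ca : CName → IndName → Assertion
  | ra : RName → IndName → IndName → Assertion
deriving DecidableEq

/-! ### Interpretations -/

/-- A DL interpretation with domain a subset of a universe `U`.  Individual names are
interpreted via `indI` (under the standard names assumption, the individual names of the
ABox under consideration are interpreted "as themselves", i.e. injectively). -/
structure Interp (U : Type) where
  dom : Set U
  indI : IndName → U
  cI : CName → Set U
  rI : RName → Set (U × U)
  cI_sub : ∀ A, cI A ⊆ dom
  rI_sub : ∀ r p, p ∈ rI r → p.1 ∈ dom ∧ p.2 ∈ dom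

variable {U : Type}

/-- Every individual name denotes an element of the domain. -/
def Interp.Proper (I : Interp U) : Prop := ∀ a, I.indI a ∈ I.dom

def Role.interp (I : Interp U) : Role → Set (U × U)
  | Role.name r => I.rI r
  | Role.inv r  => {p | (p.2, p.1) ∈ I.rI r}

def Concept.interp (I : Interp U) : Concept → Set U
  | Concept.top => I.dom
  | Concept.bot => ∅
  | Concept.atom A => I.cI A
  | Concept.nom a => {I.indI a} ∩ I.dom
  | Concept.neg C => I.dom \ Concept.interp I C
  | Concept.conj C D => Concept.interp I C ∩ Concept.interp I D
  | Concept.ex r C => {d | ∃ e, (d, e) ∈ Role.interp I r ∧ e ∈ Concept.interp I C}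

def Assertion.sat (I : Interp U) : Assertion → Prop
  | Assertion.ca A a => I.indI a ∈ I.cI A
  | Assertion.ra r a b => (I.indI a, I.indI b) ∈ I.rI r

/-! ### Violations and cost -/

/-- Violations of a concept inclusion `C ⊑ D`. -/
def vioCI (I : Interp U) (C D : Concept) : Set U :=
  Concept.interp I C \ Concept.interp I D

/-- Violations of a role inclusion `r ⊑ s`. -/
def vioRI (I : Interp U) (r s : Role) : Set (U × U) :=
  Role.interp I r \ Role.interp I s

/-- The number of violations of an axiom. -/
noncomputable def Axiom.vioCount (I : Interp U) : Axiom → ℕ∞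
  | Axiom.ci C D => (vioCI I C D).encard
  | Axiom.ri r s => (vioRI I r s).encard

open Classical in
/-- The cost of an interpretation w.r.t. a weighted knowledge base `(T, A)` with weight
functions `wT` (on TBox axioms) and `wA` (on ABox assertions). -/
noncomputable def cost (T : Finset Axiom) (A : Finset Assertion)
    (wT : Axiom → ℕ∞) (wA : Assertion → ℕ∞) (I : Interp U) : ℕ∞ :=
  (∑ τ ∈ T, wT τ * Axiom.vioCount I τ) +
    ∑ α ∈ A, (if Assertion.sat I α then 0 else wA α)

/-! ### Queries -/

inductive Term where
  | var : ℕ → Term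
  | ind : IndName → Term
deriving DecidableEq

inductive QAtom where
  | ca : CName → Term → QAtom
  | ra : RName → Term → Term → QAtom
deriving DecidableEq

/-- A Boolean conjunctive query: a finite set of atoms, all of whose variables are
(implicitly) existentially quantified. -/
abbrev BCQ := Finset QAtom

def Term.eval (I : Interp U) (π : ℕ → U) : Term → U
  | Term.var v => π v
  | Term.ind a => I.indI a

def QAtom.sat (I : Interp U) (π : ℕ → U) : QAtom → Prop
  | QAtom.ca A t => Term.eval I π t ∈ I.cI A
  | QAtom.ra r t t' => (Term.eval I π t, Term.eval I π t') ∈ I.rI r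

/-- Satisfaction of a BCQ in an interpretation. -/
def satQ (I : Interp U) (q : BCQ) : Prop :=
  ∃ π : ℕ → U, (∀ v, π v ∈ I.dom) ∧ ∀ a ∈ q, QAtom.sat I π a

/-- An instance query is a BCQ with a single atom. -/
def IsIQ (q : BCQ) : Prop := ∃ a : QAtom, q = {a}

/-! ### Cost-based semantics -/

/-- `k`-satisfiability: some interpretation has cost at most `k`. -/
def ksat (T : Finset Axiom) (A : Finset Assertion)
    (wT : Axiom → ℕ∞) (wA : Assertion → ℕ∞) (k : ℕ) : Prop :=
  ∃ (U : Type) (I : Interp U), I.Proper ∧ cost T A wT wA I ≤ (k : ℕ∞)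

/-- `K ⊨ₚᵏ q`: some interpretation of cost at most `k` satisfies `q`. -/
def satP (T : Finset Axiom) (A : Finset Assertion)
    (wT : Axiom → ℕ∞) (wA : Assertion → ℕ∞) (k : ℕ) (q : BCQ) : Prop :=
  ∃ (U : Type) (I : Interp U), I.Proper ∧ cost T A wT wA I ≤ (k : ℕ∞) ∧ satQ I q

/-- `K ⊨꜀ᵏ q`: every interpretation of cost at most `k` satisfies `q`. -/
def satC (T : Finset Axiom) (A : Finset Assertion)
    (wT : Axiom → ℕ∞) (wA : Assertion → ℕ∞) (k : ℕ) (q : BCQ) : Prop :=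
  ∀ (U : Type) (I : Interp U), I.Proper → cost T A wT wA I ≤ (k : ℕ∞) → satQ I q

/-- The optimal cost of a weighted knowledge base. -/
noncomputable def optCost (T : Finset Axiom) (A : Finset Assertion)
    (wT : Axiom → ℕ∞) (wA : Assertion → ℕ∞) : ℕ∞ :=
  sInf {c : ℕ∞ | ∃ (U : Type) (I : Interp U), I.Proper ∧ cost T A wT wA I = c}

/-- `K ⊨ₚᵒᵖᵗ q`: some interpretation of optimal cost satisfies `q`. -/
noncomputable def satPopt (T : Finset Axiom) (A : Finset Assertion)
    (wT : Axiom → ℕ∞) (wA : Assertion → ℕ∞) (q : BCQ) : Prop :=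
  ∃ (U : Type) (I : Interp U), I.Proper ∧ cost T A wT wA I = optCost T A wT wA ∧ satQ I q

/-- `K ⊨꜀ᵒᵖᵗ q`: every interpretation of optimal cost satisfies `q`. -/
noncomputable def satCopt (T : Finset Axiom) (A : Finset Assertion)
    (wT : Axiom → ℕ∞) (wA : Assertion → ℕ∞) (q : BCQ) : Prop :=
  ∀ (U : Type) (I : Interp U), I.Proper → cost T A wT wA I = optCost T A wT wA → satQ I q

/-! ### Occurrences of symbols -/

def Role.base : Role → RName
  | Role.name r => r
  | Role.inv r => r

def Concept.cnames : Concept → Finset CName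
  | Concept.atom A => {A}
  | Concept.neg C => C.cnames
  | Concept.conj C D => C.cnames ∪ D.cnames
  | Concept.ex _ C => C.cnames
  | _ => ∅

def Concept.rnames : Concept → Finset RName
  | Concept.neg C => C.rnames
  | Concept.conj C D => C.rnames ∪ D.rnames
  | Concept.ex r C => insert r.base C.rnames
  | _ => ∅

def Concept.indNames : Concept → Finset IndName
  | Concept.nom a => {a}
  | Concept.neg C => C.indNames
  | Concept.conj C D => C.indNames ∪ D.indNames
  | Concept.ex _ C => C.indNames
  | _ => ∅

def Axiom.cnames : Axiom → Finset CName
  | Axiom.ci C D => C.cnames ∪ D.cnames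
  | Axiom.ri _ _ => ∅

def Axiom.rnames : Axiom → Finset RName
  | Axiom.ci C D => C.rnames ∪ D.rnames
  | Axiom.ri r s => {r.base, s.base}

def Axiom.indNames : Axiom → Finset IndName
  | Axiom.ci C D => C.indNames ∪ D.indNames
  | Axiom.ri _ _ => ∅

def Assertion.cnames : Assertion → Finset CName
  | Assertion.ca A _ => {A}
  | Assertion.ra _ _ _ => ∅

def Assertion.rnames : Assertion → Finset RName
  | Assertion.ca _ _ => ∅
  | Assertion.ra r _ _ => {r}

def Assertion.indNames : Assertion → Finset IndName
  | Assertion.ca _ a => {a}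
  | Assertion.ra _ a b => {a, b}

/-- The individual names occurring in an ABox. -/
def aboxInds (A : Finset Assertion) : Finset IndName := A.biUnion Assertion.indNames

/-- The individual names occurring in a KB. -/
def kbInds (T : Finset Axiom) (A : Finset Assertion) : Finset IndName :=
  T.biUnion Axiom.indNames ∪ aboxInds A

def Term.indNames : Term → Finset IndName
  | Term.var _ => ∅
  | Term.ind a => {a}

def QAtom.indNames : QAtom → Finset IndName
  | QAtom.ca _ t => t.indNames
  | QAtom.ra _ t t' => t.indNames ∪ t'.indNames

def QAtom.cnames : QAtom → Finset CName
  | QAtom.ca A _ => {A}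
  | QAtom.ra _ _ _ => ∅

def qInds (q : BCQ) : Finset IndName := q.biUnion QAtom.indNames

def qCnames (q : BCQ) : Finset CName := q.biUnion QAtom.cnames

/-! ### Sizes -/

def Concept.size : Concept → ℕ
  | Concept.top => 1
  | Concept.bot => 1
  | Concept.atom _ => 1
  | Concept.nom _ => 1
  | Concept.neg C => C.size + 1
  | Concept.conj C D => C.size + D.size + 1
  | Concept.ex _ C => C.size + 2

def Axiom.size : Axiom → ℕ
  | Axiom.ci C D => C.size + D.size + 1
  | Axiom.ri _ _ => 3

def Assertion.size : Assertion → ℕ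
  | Assertion.ca _ _ => 2
  | Assertion.ra _ _ _ => 3

def tboxSize (T : Finset Axiom) : ℕ := ∑ τ ∈ T, τ.size

def aboxSize (A : Finset Assertion) : ℕ := ∑ α ∈ A, α.size

/-! ### DL-Lite fragments -/

/-- Basic concepts: concept names and unqualified existential restrictions `∃r` (with a
possibly inverse role `r`), the latter rendered as `∃r.⊤`. -/
inductive IsBasic : Concept → Prop
  | atom (A : CName) : IsBasic (Concept.atom A)
  | ex (r : Role) : IsBasic (Concept.ex r Concept.top)

/-- A `DL-Lite_core` axiom: `B ⊑ C` or `B ⊓ C ⊑ ⊥` with `B, C` basic concepts. -/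
def IsCoreAxiom (τ : Axiom) : Prop :=
  (∃ B C, τ = Axiom.ci B C ∧ IsBasic B ∧ IsBasic C) ∨
  (∃ B C, τ = Axiom.ci (Concept.conj B C) Concept.bot ∧ IsBasic B ∧ IsBasic C)

def IsDLLiteCore (T : Finset Axiom) : Prop := ∀ τ ∈ T, IsCoreAxiom τ

/-- Concepts built from basic concepts using `¬`, `⊓` (and hence also `⊔`). -/
inductive IsBoolConcept : Concept → Prop
  | basic {C} : IsBasic C → IsBoolConcept C
  | neg {C} : IsBoolConcept C → IsBoolConcept (Concept.neg C)
  | conj {C D} : IsBoolConcept C → IsBoolConcept D → IsBoolConcept (Concept.conj C D)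

/-- A `DL-Lite_bool^H` axiom: a concept inclusion between Boolean combinations of basic
concepts, or a role inclusion. -/
def IsBoolHAxiom (τ : Axiom) : Prop :=
  (∃ C D, τ = Axiom.ci C D ∧ IsBoolConcept C ∧ IsBoolConcept D) ∨ (∃ r s, τ = Axiom.ri r s)

def IsDLLiteBoolH (T : Finset Axiom) : Prop := ∀ τ ∈ T, IsBoolHAxiom τ

/-- All subconcepts of a concept (including itself). -/
def Concept.subc : Concept → Finset Concept
  | Concept.top => {Concept.top}
  | Concept.bot => {Concept.bot}
  | Concept.atom A => {Concept.atom A}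
  | Concept.nom a => {Concept.nom a}
  | Concept.neg C => insert (Concept.neg C) C.subc
  | Concept.conj C D => insert (Concept.conj C D) (C.subc ∪ D.subc)
  | Concept.ex r C => insert (Concept.ex r C) C.subc

def Axiom.concepts : Axiom → Finset Concept
  | Axiom.ci C D => C.subc ∪ D.subc
  | Axiom.ri _ _ => ∅

/-- `𝒞`: the closure of the set of concepts occurring in `T` under negation and
subconcepts. -/
def clos (T : Finset Axiom) : Finset Concept :=
  T.biUnion Axiom.concepts ∪ (T.biUnion Axiom.concepts).image Concept.neg

/-- The type `tp_I(d) = { C ∈ 𝒞 ∣ d ∈ C^I }` of an element. -/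
def tp (T : Finset Axiom) (I : Interp U) (d : U) : Set Concept :=
  {C | C ∈ clos T ∧ d ∈ Concept.interp I C}

open Classical in
/-- The map `ρ`, sending KB individuals to themselves and any other element to the fresh
element `w_{tp_I(d)}` indexed by its type. -/
noncomputable def rho (T : Finset Axiom) (A : Finset Assertion) (I : Interp U)
    (d : U) : U ⊕ Set Concept :=
  if d ∈ I.indI '' (kbInds T A : Set IndName) then Sum.inl d else Sum.inr (tp T I d)

/-- The image interpretation `J = ρ(I)`. -/
noncomputable def quotI (T : Finset Axiom) (A : Finset Assertion) (I : Interp U) :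
    Interp (U ⊕ Set Concept) where
  dom := rho T A I '' I.dom
  indI := fun a => rho T A I (I.indI a)
  cI := fun X => rho T A I '' I.cI X
  rI := fun r => (fun p : U × U => (rho T A I p.1, rho T A I p.2)) '' I.rI r
  cI_sub := fun X => Set.image_mono (I.cI_sub X)
  rI_sub := by
    rintro r p ⟨x, hx, rfl⟩
    exact ⟨Set.mem_image_of_mem _ (I.rI_sub r x hx).1,
      Set.mem_image_of_mem _ (I.rI_sub r x hx).2⟩

/-! By induction on concepts of `𝒞`: merging elements is harmless for concept names and
existential restrictions because `ρ` only merges elements of the same type, and for nominals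
because it merges no KB individual with anything else. -/

def Interp.map {V : Type} (f : U → V) (I : Interp U) : Interp V where
  dom := f '' I.dom
  indI := fun a => f (I.indI a)
  cI := fun X => f '' I.cI X
  rI := fun r => (fun p : U × U => (f p.1, f p.2)) '' I.rI r
  cI_sub := fun X => Set.image_mono (I.cI_sub X)
  rI_sub := by
    rintro r p ⟨x, hx, rfl⟩
    exact ⟨Set.mem_image_of_mem _ (I.rI_sub r x hx).1,
      Set.mem_image_of_mem _ (I.rI_sub r x hx).2⟩

theorem quotI_eq_map (T : Finset Axiom) (A : Finset Assertion) (I : Interp U) :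
    quotI T A I = I.map (rho T A I) :=
  rfl

theorem Role.mem_dom_of_mem_interp {I : Interp U} {r : Role} {p : U × U}
    (h : p ∈ r.interp I) : p.1 ∈ I.dom ∧ p.2 ∈ I.dom := by
  cases r with
  | name r => exact I.rI_sub r p h
  | inv r => exact (I.rI_sub r _ h).symm

theorem Role.interp_map {V : Type} (f : U → V) (I : Interp U) (r : Role) :
    r.interp (I.map f) = (fun p : U × U => (f p.1, f p.2)) '' r.interp I := by
  cases r with
  | name r => rfl
  | inv r =>
    ext ⟨x, y⟩
    constructor
    · rintro ⟨⟨a, b⟩, hab, heq⟩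
      exact ⟨(b, a), hab, by simp_all⟩
    · rintro ⟨⟨a, b⟩, hab, heq⟩
      exact ⟨(b, a), hab, by simp_all⟩

theorem Concept.mem_subc_self (C : Concept) : C ∈ C.subc := by
  cases C <;> simp [Concept.subc]

theorem Concept.subc_subset_of_mem_subc {C D : Concept} (h : D ∈ C.subc) :
    D.subc ⊆ C.subc := by
  induction C with
  | neg C ih | ex _ C ih =>
    simp only [Concept.subc, Finset.mem_insert] at h
    rcases h with rfl | h
    · exact subset_rfl
    · exact (ih h).trans (Finset.subset_insert _ _)
  | conj C C' ih ih' =>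
    simp only [Concept.subc, Finset.mem_insert, Finset.mem_union] at h
    rcases h with rfl | h | h
    · exact subset_rfl
    · exact (ih h).trans (Finset.subset_union_left.trans (Finset.subset_insert _ _))
    · exact (ih' h).trans (Finset.subset_union_right.trans (Finset.subset_insert _ _))
  | _ => simp only [Concept.subc, Finset.mem_singleton] at h; rw [h]

theorem Concept.mem_indNames_of_nom_mem_subc {C : Concept} {a : IndName}
    (h : Concept.nom a ∈ C.subc) : a ∈ C.indNames := by
  induction C with
  | nom b => simp_all [Concept.subc, Concept.indNames]
  | conj C C' ih ih' =>
    simp only [Concept.subc, Finset.mem_insert, Finset.mem_union, reduceCtorEq,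
      false_or] at h
    exact Finset.mem_union.2 (h.imp ih ih')
  | neg C ih | ex _ C ih =>
    simp only [Concept.subc, Finset.mem_insert, reduceCtorEq, false_or] at h
    exact ih h
  | _ => simp [Concept.subc] at h

theorem Axiom.subc_subset_concepts {τ : Axiom} {C : Concept} (h : C ∈ τ.concepts) :
    C.subc ⊆ τ.concepts := by
  cases τ with
  | ci D E =>
    simp only [Axiom.concepts, Finset.mem_union] at h ⊢
    rcases h with h | h
    · exact (Concept.subc_subset_of_mem_subc h).trans Finset.subset_union_left
    · exact (Concept.subc_subset_of_mem_subc h).trans Finset.subset_union_right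
  | ri => simp [Axiom.concepts] at h

theorem subc_subset_clos {T : Finset Axiom} {C : Concept} (h : C ∈ clos T) :
    C.subc ⊆ clos T := by
  have hbi : ∀ {D}, D ∈ T.biUnion Axiom.concepts → D.subc ⊆ T.biUnion Axiom.concepts := by
    intro D hD
    obtain ⟨τ, hτ, hDτ⟩ := Finset.mem_biUnion.1 hD
    exact (Axiom.subc_subset_concepts hDτ).trans (Finset.subset_biUnion_of_mem _ hτ)
  simp only [clos, Finset.mem_union, Finset.mem_image] at h
  rcases h with h | ⟨D, hD, rfl⟩
  · exact (hbi h).trans Finset.subset_union_left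
  · rw [Concept.subc, Finset.insert_subset_iff]
    exact ⟨Finset.mem_union_right _ (Finset.mem_image_of_mem _ hD),
      (hbi hD).trans Finset.subset_union_left⟩

theorem mem_kbInds_of_nom_mem_clos {T : Finset Axiom} (A : Finset Assertion) {a : IndName}
    (h : Concept.nom a ∈ clos T) : a ∈ kbInds T A := by
  simp only [clos, Finset.mem_union, Finset.mem_image, reduceCtorEq, and_false,
    exists_false, or_false, Finset.mem_biUnion] at h
  obtain ⟨τ, hτ, haτ⟩ := h
  refine Finset.mem_union_left _ (Finset.mem_biUnion.2 ⟨τ, hτ, ?_⟩)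
  cases τ with
  | ci C D =>
    simp only [Axiom.concepts, Finset.mem_union] at haτ
    exact Finset.mem_union.2 (haτ.imp Concept.mem_indNames_of_nom_mem_subc
      Concept.mem_indNames_of_nom_mem_subc)
  | ri => simp [Axiom.concepts] at haτ

section map

variable {V : Type} (f : U → V) (I : Interp U) (S : Finset Concept)

theorem Concept.mem_interp_map_iff
    (htp : ∀ D ∈ S, ∀ d e, f d = f e → d ∈ D.interp I → e ∈ D.interp I)
    (hnom : ∀ a, Concept.nom a ∈ S → ∀ d, f d = f (I.indI a) → d = I.indI a)
    (C : Concept) (hC : C.subc ⊆ S) {d : U} (hd : d ∈ I.dom) :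
    f d ∈ C.interp (I.map f) ↔ d ∈ C.interp I := by
  induction C generalizing d with
  | top => exact ⟨fun _ => hd, fun _ => ⟨d, hd, rfl⟩⟩
  | bot => simp [Concept.interp]
  | atom X =>
    exact ⟨fun ⟨e, he, hef⟩ => htp _ (hC (Concept.mem_subc_self _)) e d hef he,
      fun h => ⟨d, h, rfl⟩⟩
  | nom a =>
    exact ⟨fun ⟨had, _⟩ => ⟨hnom a (hC (Concept.mem_subc_self _)) d had, hd⟩,
      fun ⟨had, _⟩ => ⟨congrArg f had, d, hd, rfl⟩⟩
  | neg C ih =>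
    have ih := ih ((Finset.subset_insert _ _).trans hC) hd
    exact ⟨fun ⟨_, h⟩ => ⟨hd, mt ih.2 h⟩, fun ⟨_, h⟩ => ⟨⟨d, hd, rfl⟩, mt ih.1 h⟩⟩
  | conj C C' ih ih' =>
    have hC := (Finset.subset_insert _ _).trans hC
    exact and_congr (ih (Finset.subset_union_left.trans hC) hd)
      (ih' (Finset.subset_union_right.trans hC) hd)
  | ex r C ih =>
    have ih := fun {e} => @ih ((Finset.subset_insert _ _).trans hC) e
    constructor
    · rintro ⟨_, hr, hfe⟩
      rw [Role.interp_map] at hr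
      obtain ⟨⟨d', e⟩, hde, heq⟩ := hr
      simp only [Prod.mk.injEq] at heq
      obtain ⟨hd', rfl⟩ := heq
      have he := (ih (Role.mem_dom_of_mem_interp hde).2).1 hfe
      exact htp _ (hC (Concept.mem_subc_self _)) d' d hd' ⟨e, hde, he⟩
    · rintro ⟨e, hde, he⟩
      refine ⟨f e, ?_, (ih (Role.mem_dom_of_mem_interp hde).2).2 he⟩
      rw [Role.interp_map]
      exact ⟨(d, e), hde, rfl⟩

end map

section rho

variable {T : Finset Axiom} {A : Finset Assertion} {I : Interp U}

theorem eq_or_tp_eq_of_rho_eq {d e : U} (h : rho T A I d = rho T A I e) :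
    d = e ∨ tp T I d = tp T I e := by
  unfold rho at h
  split_ifs at h <;> simp_all

theorem eq_of_rho_eq_rho_indI {a : IndName} (ha : a ∈ kbInds T A) {d : U}
    (h : rho T A I d = rho T A I (I.indI a)) : d = I.indI a := by
  have hind : rho T A I (I.indI a) = Sum.inl (I.indI a) := if_pos ⟨a, ha, rfl⟩
  rw [hind] at h
  unfold rho at h
  split_ifs at h
  simp_all

theorem mem_interp_of_rho_eq {d e : U} (h : rho T A I d = rho T A I e) {C : Concept}
    (hC : C ∈ clos T) (hd : d ∈ C.interp I) : e ∈ C.interp I := by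
  rcases eq_or_tp_eq_of_rho_eq h with rfl | htp
  · exact hd
  · exact (show C ∈ tp T I e from htp ▸ ⟨hC, hd⟩).2

end rho

theorem statement3_general (T : Finset Axiom) (A : Finset Assertion)
    {U : Type} (I : Interp U)
    (d : U) (hd : d ∈ I.dom) :
    tp T (quotI T A I) (rho T A I d) = tp T I d := by
  ext C
  refine and_congr_right fun hC => ?_
  rw [quotI_eq_map]
  exact Concept.mem_interp_map_iff (rho T A I) I (clos T)
    (fun _ hD _ _ h => mem_interp_of_rho_eq h hD)
    (fun _ ha _ => eq_of_rho_eq_rho_indI (mem_kbInds_of_nom_mem_clos A ha))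
    C (subc_subset_clos hC) hd

/-- The quotient construction preserves types: for every `d ∈ Δ^I`,
`tp_J(ρ(d)) = tp_I(d)` where `J = ρ(I)`. -/
theorem statement3 (T : Finset Axiom) (A : Finset Assertion)
    (wT : Axiom → ℕ∞) (wA : Assertion → ℕ∞)
    (hwT : ∀ τ ∈ T, 1 ≤ wT τ) (hwA : ∀ α ∈ A, 1 ≤ wA α)
    {U : Type} (I : Interp U) (hI : I.Proper)
    (d : U) (hd : d ∈ I.dom) :
    tp T (quotI T A I) (rho T A I d) = tp T I d :=
  statement3_general T A I d hd

end DL
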